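/- Fireballs are closed under anti-substitution of inert terms: for a term t, a variable x, and an inert term i, (1) if t[x:=i] is an abstraction then t is an abstraction; (2) if t[x:=i] is inert then t is inert; (3) if t[x:=i] is a fireball then t is a fireball. -/
import Mathlib


/-- λ-terms in de Bruijn notation: variables, abstractions, applications. -/
inductive Tm : Type
  | var : Nat → Tm
  | lam : Tm → Tm
  | app : Tm → Tm → Tm

namespace Tm

/-- Shift (by one) the free de Bruijn indices `≥ k`. -/
def shift (k : Nat) : Tm → Tm
  | var n => if k ≤ n then var (n+1) else var n
  | lam t => lam (shift (k+1) t)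
  | app t u => app (shift k t) (shift k u)

/-- Capture-avoiding substitution of `u` for the free variable `k` in a term. -/
def subst : Tm → Nat → Tm → Tm
  | var n, k, u => if n = k then u else if k < n then var (n-1) else var n
  | lam t, k, u => lam (subst t (k+1) (shift 0 u))
  | app t s, k, u => app (subst t k u) (subst s k u)

/-- Values: variables and abstractions. -/
inductive IsValue : Tm → Prop
  | var : IsValue (var n)
  | lam : IsValue (lam t)

end Tm
open Tm

mutual
/-- Inert terms: `i ::= x | i f`. -/
inductive Inert : Tm → Prop
  | var : Inert (.var n)
  | app : Inert i → Fireball f → Inert (.app i f)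
/-- Fireballs: `f ::= λx.t | i`. -/
inductive Fireball : Tm → Prop
  | lam : Fireball (.lam t)
  | inert : Inert i → Fireball i
end

/-- Abstraction steps: root rule `(λx.t)(λy.u) ↦ t[x:=λy.u]`, weak closure. -/
inductive StepBL : Tm → Tm → Prop
  | beta : StepBL (.app (.lam t) (.lam u)) (subst t 0 (.lam u))
  | appL : StepBL t t' → StepBL (.app t u) (.app t' u)
  | appR : StepBL u u' → StepBL (.app t u) (.app t u')

/-- Inert steps: root rule `(λx.t)i ↦ t[x:=i]` with `i` inert, weak closure. -/
inductive StepBI : Tm → Tm → Prop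
  | beta : Inert i → StepBI (.app (.lam t) i) (subst t 0 i)
  | appL : StepBI t t' → StepBI (.app t u) (.app t' u)
  | appR : StepBI u u' → StepBI (.app t u) (.app t u')

/-- The fireball reduction `→βf = →βλ ∪ →βi`. -/
def StepBF (t u : Tm) : Prop := StepBL t u ∨ StepBI t u

lemma inert_not_lam {i : Tm} (hi : Inert i) : ∀ s, i ≠ .lam s := by
  cases hi <;> intro s h <;> simp at h

/-- fireballs are closed under anti-substitution of inert terms. -/
theorem fireballs_anti_substitution (t i : Tm) (x : Nat) (hi : Inert i) :
    ((∃ s, subst t x i = .lam s) → ∃ s, t = .lam s) ∧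
    (Inert (subst t x i) → Inert t) ∧
    (Fireball (subst t x i) → Fireball t) := by
  induction t generalizing x with
  | var n =>
    refine ⟨?_, fun _ => Inert.var, fun _ => Fireball.inert Inert.var⟩
    rintro ⟨s, hs⟩
    simp only [subst] at hs
    split at hs
    · exact absurd hs (inert_not_lam hi s)
    · split at hs <;> simp at hs
  | lam t ih =>
    refine ⟨fun _ => ⟨t, rfl⟩, fun h => ?_, fun _ => Fireball.lam⟩
    cases h
  | app t s iht ihs =>
    have key : Inert (subst (Tm.app t s) x i) → Inert (Tm.app t s) := by
      intro h
      simp only [subst] at h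
      cases h with
      | app h1 h2 => exact Inert.app ((iht x).2.1 h1) ((ihs x).2.2 h2)
    refine ⟨fun ⟨w, hw⟩ => by simp [subst] at hw, key, fun h => ?_⟩
    cases h with
    | inert h => exact Fireball.inert (key h)
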